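/- arXiv:2506.11554 — 6 statements merged into one kernel-verified Lean document; each statement's English description precedes it below -/
import Mathlib

section
/- For all integers P, Q and every rational number R, the Lucas semigroup L(P,Q,R) is an additive subsemigroup of ℕ containing 0; that is, 0 ∈ L(P,Q,R), and if m, n ∈ L(P,Q,R) then m + n ∈ L(P,Q,R). -/
/-- The Lucas sequence `U_n(P,Q)`: `U_0 = 0`, `U_1 = 1`,
`U_{n+2} = P·U_{n+1} − Q·U_n`. -/
def lucasU (P Q : ℤ) : ℕ → ℤ
  | 0 => 0
  | 1 => 1
  | n + 2 => P * lucasU P Q (n + 1) - Q * lucasU P Q n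

/-- The Lucas semigroup `L(P,Q,R) = {n ∈ ℕ : U_n(P,Q)·R ∈ ℤ}`. -/
def lucasSG (P Q : ℤ) (R : ℚ) : Set ℕ :=
  {n : ℕ | ∃ k : ℤ, (lucasU P Q n : ℚ) * R = (k : ℚ)}

lemma lucasU_add (P Q : ℤ) (m : ℕ) : ∀ n : ℕ,
    lucasU P Q (m + 1 + n) =
      lucasU P Q (m + 1) * lucasU P Q (n + 1) - Q * lucasU P Q m * lucasU P Q n := by
  intro n
  induction n using Nat.twoStepInduction with
  | zero => simp [lucasU]
  | one => simp [lucasU]; ring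
  | more n ih1 ih2 =>
      have h : m + 1 + (n + 2) = (m + 1 + n) + 2 := by ring
      rw [h, show lucasU P Q ((m+1+n)+2) = P * lucasU P Q (m+1+n+1) - Q * lucasU P Q (m+1+n) from rfl,
        show m + 1 + n + 1 = m + 1 + (n+1) from by ring, ih2, ih1,
        show lucasU P Q (n+2+1) = P * lucasU P Q (n+2) - Q * lucasU P Q (n+1) from rfl,
        show lucasU P Q (n+2) = P * lucasU P Q (n+1) - Q * lucasU P Q n from rfl]
      ring

/-- The Lucas semigroup `L(P,Q,R)` contains `0` and is closed under addition,
i.e. it is an additive subsemigroup of `ℕ` containing `0`. -/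
theorem lucasSG_zero_mem_and_add_mem (P Q : ℤ) (R : ℚ) :
    0 ∈ lucasSG P Q R ∧
      ∀ m n : ℕ, m ∈ lucasSG P Q R → n ∈ lucasSG P Q R → m + n ∈ lucasSG P Q R := by
  constructor
  · exact ⟨0, by simp [lucasU]⟩
  · rintro m n ⟨a, ha⟩ ⟨b, hb⟩
    cases m with
    | zero => exact ⟨b, by simpa using hb⟩
    | succ m =>
        refine ⟨lucasU P Q n.succ * a - Q * lucasU P Q m * b, ?_⟩
        rw [lucasU_add P Q m n]
        push_cast
        rw [sub_mul, mul_comm ((lucasU P Q (m+1) : ℚ)) ((lucasU P Q (n+1) : ℚ)),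
          mul_assoc, ha, mul_assoc, hb]
end

section
/- Let P, Q ∈ ℤ with P·Q = 0, let p be a prime, and let r ≥ 1 be an integer. Then: (1) if P ≠ 0, Q = 0, and p ∤ P, then L(P,Q,p^{−r}) = {0}; (2) if P ≠ 0, Q = 0, and p ∣ P, then L(P,Q,p^{−r}) = S_{⌈r/ν_p(P)⌉ + 1}; (3) if P = 0, Q ≠ 0, and p ∤ Q, then L(P,Q,p^{−r}) = ⟨2⟩; (4) if P = 0, Q ≠ 0, and p ∣ Q, then L(P,Q,p^{−r}) = ⟨2, 2⌈r/ν_p(Q)⌉ + 1⟩; (5) if P = Q = 0, then L(P,Q,p^{−r}) = S₂ = ℕ \ {1}. -/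
/-- The local Lucas semigroup `L(P,Q,p^{-r}) = {n ∈ ℕ : ν_p(U_n) ≥ r}`,
equivalently the set of `n` with `U_n · p^{-r} ∈ ℤ`. -/
def localLucasSG (P Q : ℤ) (p : ℕ) (r : ℤ) : Set ℕ :=
  lucasSG P Q ((p : ℚ) ^ (-r))

/-- Ceiling of the quotient `r / a` of natural numbers. -/
def ceilDivNat (r a : ℕ) : ℕ := (⌈(r : ℚ) / (a : ℚ)⌉).toNat

/-- The ordinary ("tail") semigroup `S_m = {0} ∪ {n ∈ ℕ : n ≥ m}`. -/
def tailSG (m : ℕ) : Set ℕ := {n : ℕ | n = 0 ∨ m ≤ n}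

/-!
When `Q = 0` the recurrence collapses to `U (n + 1) = P ^ n`, and when `P = 0` it gives
`U (2k) = 0` and `U (2k + 1) = (-Q) ^ k`. So membership of `n` in `L(P, Q, p^{-r})` reduces to
`p ^ r ∣ a ^ m` for `a = P` or `a = -Q`, which holds exactly when `r ≤ m · ν_p(a)`, i.e.
`⌈r / ν_p(a)⌉ ≤ m`; if `p ∤ a` this never happens since `r ≥ 1`.
-/

lemma ceilDivNat_le_iff {r v : ℕ} (hv : 0 < v) (k : ℕ) : ceilDivNat r v ≤ k ↔ r ≤ k * v := by
  have hv' : (0 : ℚ) < v := by exact_mod_cast hv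
  rw [ceilDivNat, Int.toNat_le, Int.ceil_le, div_le_iff₀ hv']
  exact_mod_cast Iff.rfl

lemma padicValInt_pow (p : ℕ) [Fact p.Prime] (a : ℤ) (m : ℕ) :
    padicValInt p (a ^ m) = m * padicValInt p a := by
  rw [padicValInt, Int.natAbs_pow, padicValNat.pow, padicValInt]

lemma padicValInt_neg (p : ℕ) (a : ℤ) : padicValInt p (-a) = padicValInt p a := by
  rw [padicValInt, Int.natAbs_neg, padicValInt]

lemma prime_pow_dvd_pow_iff {p : ℕ} [Fact p.Prime] {a : ℤ} (ha : a ≠ 0) (r m : ℕ) :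
    (p : ℤ) ^ r ∣ a ^ m ↔ r ≤ m * padicValInt p a := by
  rw [padicValInt_dvd_iff, padicValInt_pow, or_iff_right (pow_ne_zero m ha)]

lemma one_le_padicValInt {p : ℕ} [Fact p.Prime] {a : ℤ} (ha : a ≠ 0) (hpa : (p : ℤ) ∣ a) :
    1 ≤ padicValInt p a := by
  simpa [ha] using (padicValInt_dvd_iff 1 a).1 (by simpa using hpa)

lemma mem_closure_two_iff (n : ℕ) : n ∈ AddSubmonoid.closure ({2} : Set ℕ) ↔ Even n := by
  simp only [AddSubmonoid.mem_closure_singleton, smul_eq_mul, even_iff_exists_two_mul]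
  exact exists_congr fun k => by omega

lemma mem_closure_two_odd_iff {d : ℕ} (hd : Odd d) (n : ℕ) :
    n ∈ AddSubmonoid.closure ({2, d} : Set ℕ) ↔ Even n ∨ d ≤ n := by
  obtain ⟨c, rfl⟩ := hd
  simp only [AddSubmonoid.mem_closure_pair, smul_eq_mul, Nat.even_iff]
  constructor
  · rintro ⟨i, j, rfl⟩
    rcases j with _ | j
    · omega
    · right; nlinarith
  · rintro (h | h)
    · exact ⟨n / 2, 0, by omega⟩
    · rcases Nat.even_or_odd' n with ⟨k, rfl | rfl⟩
      · exact ⟨k, 0, by omega⟩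
      · exact ⟨k - c, 1, by omega⟩

lemma mem_localLucasSG_iff {P Q : ℤ} {p : ℕ} (hp : p ≠ 0) (r n : ℕ) :
    n ∈ localLucasSG P Q p r ↔ (p : ℤ) ^ r ∣ lucasU P Q n := by
  have hpr : (p : ℚ) ^ r ≠ 0 := pow_ne_zero r (by exact_mod_cast hp)
  simp only [localLucasSG, lucasSG, Set.mem_ofPred_eq, zpow_neg, zpow_natCast, ← div_eq_mul_inv,
    div_eq_iff hpr, Dvd.dvd]
  refine exists_congr fun k => ?_
  rw [mul_comm]
  exact_mod_cast Iff.rfl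

lemma zero_mem_localLucasSG (P Q : ℤ) (p : ℕ) (r : ℤ) : 0 ∈ localLucasSG P Q p r :=
  ⟨0, by simp [lucasU]⟩

lemma lucasU_zero_right_succ (P : ℤ) : ∀ n, lucasU P 0 (n + 1) = P ^ n
  | 0 => by simp [lucasU]
  | n + 1 => by
    rw [lucasU, lucasU_zero_right_succ P n]
    ring

lemma lucasU_zero_left_even (Q : ℤ) : ∀ k, lucasU 0 Q (2 * k) = 0
  | 0 => rfl
  | k + 1 => by
    rw [show 2 * (k + 1) = 2 * k + 2 by ring, lucasU, lucasU_zero_left_even Q k]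
    ring

lemma lucasU_zero_left_odd (Q : ℤ) : ∀ k, lucasU 0 Q (2 * k + 1) = (-Q) ^ k
  | 0 => by simp [lucasU]
  | k + 1 => by
    rw [show 2 * (k + 1) + 1 = 2 * k + 1 + 2 by ring, lucasU, lucasU_zero_left_odd Q k]
    ring

lemma prime_pow_not_dvd_pow {p : ℕ} (hp : p.Prime) {a : ℤ} (ha : ¬(p : ℤ) ∣ a) {r : ℕ}
    (hr : 1 ≤ r) (m : ℕ) : ¬(p : ℤ) ^ r ∣ a ^ m :=
  fun h => ha <| (Nat.prime_iff_prime_int.1 hp).dvd_of_dvd_pow <|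
    (dvd_pow_self _ (by omega)).trans h

lemma localLucasSG_zero_right_of_not_dvd {p : ℕ} (hp : p.Prime) {r : ℕ} (hr : 1 ≤ r) {P : ℤ}
    (hpP : ¬(p : ℤ) ∣ P) : localLucasSG P 0 p r = {0} := by
  ext (_ | n)
  · simp [zero_mem_localLucasSG]
  · simp [mem_localLucasSG_iff hp.ne_zero, lucasU_zero_right_succ,
      prime_pow_not_dvd_pow hp hpP hr]

lemma localLucasSG_zero_right_of_dvd {p : ℕ} (hp : p.Prime) (r : ℕ) {P : ℤ} (hP : P ≠ 0)
    (hpP : (p : ℤ) ∣ P) :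
    localLucasSG P 0 p r = tailSG (ceilDivNat r (padicValInt p P) + 1) := by
  have := Fact.mk hp
  ext (_ | n)
  · simp [zero_mem_localLucasSG, tailSG]
  · rw [mem_localLucasSG_iff hp.ne_zero, lucasU_zero_right_succ, prime_pow_dvd_pow_iff hP,
      ← ceilDivNat_le_iff (one_le_padicValInt hP hpP)]
    simp [tailSG]

lemma localLucasSG_zero_zero {p : ℕ} (hp : p.Prime) {r : ℕ} (hr : 1 ≤ r) :
    localLucasSG 0 0 p r = tailSG 2 := by
  have hp_not_dvd_one : ¬(p : ℤ) ^ r ∣ 1 := fun h =>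
    (Nat.prime_iff_prime_int.1 hp).not_dvd_one <| (dvd_pow_self _ (by omega)).trans h
  ext (_ | _ | n)
  · simp [zero_mem_localLucasSG, tailSG]
  · simp [mem_localLucasSG_iff hp.ne_zero, lucasU_zero_right_succ, hp_not_dvd_one, tailSG]
  · simp [mem_localLucasSG_iff hp.ne_zero, lucasU_zero_right_succ, tailSG]

lemma even_mem_localLucasSG_zero_left (Q : ℤ) (p : ℕ) (r : ℤ) (k : ℕ) :
    2 * k ∈ localLucasSG 0 Q p r :=
  ⟨0, by simp [lucasU_zero_left_even]⟩

lemma localLucasSG_zero_left_of_not_dvd {p : ℕ} (hp : p.Prime) {r : ℕ} (hr : 1 ≤ r) {Q : ℤ}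
    (hpQ : ¬(p : ℤ) ∣ Q) :
    localLucasSG 0 Q p r = (AddSubmonoid.closure ({2} : Set ℕ) : Set ℕ) := by
  have hpQ' : ¬(p : ℤ) ∣ -Q := by rwa [dvd_neg]
  ext n
  rw [SetLike.mem_coe, mem_closure_two_iff]
  rcases Nat.even_or_odd' n with ⟨k, rfl | rfl⟩
  · simp [even_mem_localLucasSG_zero_left]
  · simp [mem_localLucasSG_iff hp.ne_zero, lucasU_zero_left_odd,
      prime_pow_not_dvd_pow hp hpQ' hr]

lemma localLucasSG_zero_left_of_dvd {p : ℕ} (hp : p.Prime) (r : ℕ) {Q : ℤ} (hQ : Q ≠ 0)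
    (hpQ : (p : ℤ) ∣ Q) :
    localLucasSG 0 Q p r =
      (AddSubmonoid.closure ({2, 2 * ceilDivNat r (padicValInt p Q) + 1} : Set ℕ) : Set ℕ) := by
  have := Fact.mk hp
  ext n
  rw [SetLike.mem_coe, mem_closure_two_odd_iff (odd_two_mul_add_one _)]
  rcases Nat.even_or_odd' n with ⟨k, rfl | rfl⟩
  · simp [even_mem_localLucasSG_zero_left]
  · have hv := ceilDivNat_le_iff (r := r) (one_le_padicValInt hQ hpQ) k
    rw [mem_localLucasSG_iff hp.ne_zero, lucasU_zero_left_odd,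
      prime_pow_dvd_pow_iff (neg_ne_zero.2 hQ), padicValInt_neg, ← hv]
    simp only [Nat.not_even_two_mul_add_one, false_or]
    omega

theorem localLucasSG_of_PQ_eq_zero_general (P Q : ℤ) (p : ℕ)
    (hp : p.Prime) (r : ℕ) (hr : 1 ≤ r) :
    (P ≠ 0 → Q = 0 → ¬ (p : ℤ) ∣ P →
      localLucasSG P Q p (r : ℤ) = {0}) ∧
    (P ≠ 0 → Q = 0 → (p : ℤ) ∣ P →
      localLucasSG P Q p (r : ℤ) = tailSG (ceilDivNat r (padicValInt p P) + 1)) ∧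
    (P = 0 → Q ≠ 0 → ¬ (p : ℤ) ∣ Q →
      localLucasSG P Q p (r : ℤ) = (AddSubmonoid.closure ({2} : Set ℕ) : Set ℕ)) ∧
    (P = 0 → Q ≠ 0 → (p : ℤ) ∣ Q →
      localLucasSG P Q p (r : ℤ) =
        (AddSubmonoid.closure ({2, 2 * ceilDivNat r (padicValInt p Q) + 1} : Set ℕ) : Set ℕ)) ∧
    (P = 0 → Q = 0 → localLucasSG P Q p (r : ℤ) = tailSG 2) := by
  refine ⟨fun _ hQ hpP => ?_, fun hP hQ hpP => ?_, fun hP _ hpQ => ?_, fun hP hQ hpQ => ?_,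
    fun hP hQ => ?_⟩ <;> subst_vars
  · exact localLucasSG_zero_right_of_not_dvd hp hr hpP
  · exact localLucasSG_zero_right_of_dvd hp r hP hpP
  · exact localLucasSG_zero_left_of_not_dvd hp hr hpQ
  · exact localLucasSG_zero_left_of_dvd hp r hQ hpQ
  · exact localLucasSG_zero_zero hp hr

/-- Classification of the local Lucas semigroups `L(P,Q,p^{-r})` when `PQ = 0`. -/
theorem localLucasSG_of_PQ_eq_zero (P Q : ℤ) (hPQ : P * Q = 0) (p : ℕ)
    (hp : p.Prime) (r : ℕ) (hr : 1 ≤ r) :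
    (P ≠ 0 → Q = 0 → ¬ (p : ℤ) ∣ P →
      localLucasSG P Q p (r : ℤ) = {0}) ∧
    (P ≠ 0 → Q = 0 → (p : ℤ) ∣ P →
      localLucasSG P Q p (r : ℤ) = tailSG (ceilDivNat r (padicValInt p P) + 1)) ∧
    (P = 0 → Q ≠ 0 → ¬ (p : ℤ) ∣ Q →
      localLucasSG P Q p (r : ℤ) = (AddSubmonoid.closure ({2} : Set ℕ) : Set ℕ)) ∧
    (P = 0 → Q ≠ 0 → (p : ℤ) ∣ Q →
      localLucasSG P Q p (r : ℤ) =
        (AddSubmonoid.closure ({2, 2 * ceilDivNat r (padicValInt p Q) + 1} : Set ℕ) : Set ℕ)) ∧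
    (P = 0 → Q = 0 → localLucasSG P Q p (r : ℤ) = tailSG 2) :=
  localLucasSG_of_PQ_eq_zero_general P Q p hp r hr
end

section
/- Let P, Q ∈ ℤ and let p be a prime with p ∣ P and p ∣ Q (a special prime). Then for every integer r ≥ 1, the set {2r, 2r+1, 2r+2, …} is contained in L(P,Q,p^{−r}); in particular, the complement ℕ \ L(P,Q,p^{−r}) is finite, so L(P,Q,p^{−r}) is a numerical semigroup. -/
lemma pow_half_dvd_lucasU (P Q : ℤ) (p : ℕ) (hpP : (p : ℤ) ∣ P)
    (hpQ : (p : ℤ) ∣ Q) : ∀ n : ℕ, (p : ℤ) ^ (n / 2) ∣ lucasU P Q n := by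
  intro n
  induction n using Nat.strong_induction_on with
  | _ n ih =>
    match n with
    | 0 => simp [lucasU]
    | 1 => simp [lucasU]
    | (n + 2) =>
      have h1 := ih (n + 1) (by omega)
      have h2 := ih n (by omega)
      have hd : (n + 2) / 2 = n / 2 + 1 := by omega
      rw [lucasU, hd]
      refine dvd_sub ?_ ?_
      · have : (p : ℤ) ^ (n / 2 + 1) ∣ (p : ℤ) ^ ((n + 1) / 2 + 1) :=
          pow_dvd_pow _ (by omega)
        exact this.trans (by rw [pow_succ, mul_comm]; exact mul_dvd_mul hpP h1)
      · rw [pow_succ, mul_comm]; exact mul_dvd_mul hpQ h2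

/-- If `p` is a special prime (`p ∣ P` and `p ∣ Q`) and `r ≥ 1`, then
`{2r, 2r+1, …} ⊆ L(P,Q,p^{-r})`; in particular the complement of
`L(P,Q,p^{-r})` in `ℕ` is finite, so `L(P,Q,p^{-r})` is a numerical
semigroup. -/
theorem localLucasSG_of_special_prime_cofinite (P Q : ℤ) (p : ℕ)
    (hp : p.Prime) (hpP : (p : ℤ) ∣ P) (hpQ : (p : ℤ) ∣ Q) (r : ℕ)
    (hr : 1 ≤ r) :
    (∀ n : ℕ, 2 * r ≤ n → n ∈ localLucasSG P Q p (r : ℤ)) ∧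
      (localLucasSG P Q p (r : ℤ))ᶜ.Finite := by
  have hp0 : (p : ℚ) ≠ 0 := Nat.cast_ne_zero.mpr hp.pos.ne'
  have key : ∀ n : ℕ, 2 * r ≤ n → n ∈ localLucasSG P Q p (r : ℤ) := by
    intro n hn
    have hdvd : (p : ℤ) ^ r ∣ lucasU P Q n :=
      (pow_dvd_pow _ (by omega : r ≤ n / 2)).trans
        (pow_half_dvd_lucasU P Q p hpP hpQ n)
    obtain ⟨k, hk⟩ := hdvd
    refine ⟨k, ?_⟩
    rw [hk]
    push_cast
    rw [zpow_neg, zpow_natCast]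
    field_simp
  refine ⟨key, Set.Finite.subset (Set.finite_Iio (2 * r)) ?_⟩
  intro n hn
  by_contra h
  exact hn (key n (by simpa using h))
end

section
/- Let A = [[a, b], [c, d]] be a 2×2 matrix over ℚ with b ≠ 0, whose trace P = a + d and determinant Q = ad − bc are integers, and with Q ≠ 0. Then S(A) = L(P,Q,a) ∩ L(P,Q,b) ∩ L(P,Q,(a² − P·a + Q)/b), where L(P,Q,·) is the Lucas semigroup for the Lucas sequence with parameters (P,Q). -/
/-- The exponent semigroup `S(A) = {n ∈ ℕ : A^n has all integer entries}`. -/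
def expSG {d : ℕ} (A : Matrix (Fin d) (Fin d) ℚ) : Set ℕ :=
  {n : ℕ | ∀ i j, ∃ k : ℤ, (A ^ n) i j = (k : ℚ)}

/-- If `A = [[a,b],[c,d]]` is a `2×2` rational matrix with `b ≠ 0`, integer
trace `P = a + d`, integer determinant `Q = ad − bc`, and `Q ≠ 0`, then
`S(A) = L(P,Q,a) ∩ L(P,Q,b) ∩ L(P,Q,(a² − Pa + Q)/b)`. -/
theorem expSG_eq_lucasSG_inter (a b c d : ℚ) (hb : b ≠ 0) (P Q : ℤ)
    (hP : a + d = (P : ℚ)) (hQ : a * d - b * c = (Q : ℚ)) (hQ0 : Q ≠ 0) :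
    expSG !![a, b; c, d] =
      lucasSG P Q a ∩ lucasSG P Q b ∩
        lucasSG P Q ((a ^ 2 - (P : ℚ) * a + (Q : ℚ)) / b) := by
  set A := !![a, b; c, d] with hA
  have hA2 : A * A = (P : ℚ) • A - (Q : ℚ) • 1 := by
    ext i j
    fin_cases i <;> fin_cases j <;>
      simp [hA, Matrix.mul_apply, Fin.sum_univ_two, Matrix.one_apply]
    · linear_combination a * hP - hQ
    · linear_combination b * hP
    · linear_combination c * hP
    · linear_combination d * hP - hQ
  have key : ∀ n : ℕ, A ^ (n + 1) =
      (lucasU P Q (n + 1) : ℚ) • A - ((Q * lucasU P Q n : ℤ) : ℚ) • 1 := by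
    intro n
    induction n with
    | zero => simp [lucasU]
    | succ m ih =>
      have h1 : A ^ (m + 2) = A ^ (m + 1) * A := pow_succ A (m+1)
      rw [h1, ih, sub_mul, smul_mul_assoc, smul_mul_assoc, one_mul, hA2]
      show _ = ((lucasU P Q (m+2) : ℤ) : ℚ) • A - _
      simp only [lucasU]
      push_cast
      module
  have hc : (a ^ 2 - (P : ℚ) * a + (Q : ℚ)) / b = -c := by
    field_simp
    linear_combination a * hP - hQ
  ext n
  simp only [expSG, lucasSG, Set.mem_setOf_eq, Set.mem_inter_iff]
  cases n with
  | zero =>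
    constructor
    · intro _
      exact ⟨⟨⟨0, by simp [lucasU]⟩, ⟨0, by simp [lucasU]⟩⟩, ⟨0, by simp [lucasU]⟩⟩
    · intro _ i j
      exact ⟨if i = j then 1 else 0, by rw [pow_zero]; by_cases h : i = j <;> simp [Matrix.one_apply, h]⟩
  | succ m =>
    have e00 : (A ^ (m + 1)) 0 0 =
        (lucasU P Q (m+1) : ℚ) * a - ((Q * lucasU P Q m : ℤ) : ℚ) := by
      rw [key]; simp [hA, Matrix.one_apply]
    have e01 : (A ^ (m + 1)) 0 1 = (lucasU P Q (m+1) : ℚ) * b := by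
      rw [key]; simp [hA, Matrix.one_apply]
    have e10 : (A ^ (m + 1)) 1 0 = (lucasU P Q (m+1) : ℚ) * c := by
      rw [key]; simp [hA, Matrix.one_apply]
    have e11 : (A ^ (m + 1)) 1 1 =
        (lucasU P Q (m+1) : ℚ) * d - ((Q * lucasU P Q m : ℤ) : ℚ) := by
      rw [key]; simp [hA, Matrix.one_apply]
    constructor
    · intro h
      obtain ⟨k00, h00⟩ := h 0 0
      obtain ⟨k01, h01⟩ := h 0 1
      obtain ⟨k10, h10⟩ := h 1 0
      rw [e00] at h00; rw [e01] at h01; rw [e10] at h10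
      refine ⟨⟨⟨k00 + Q * lucasU P Q m, ?_⟩, ⟨k01, ?_⟩⟩, ⟨-k10, ?_⟩⟩
      · push_cast at h00 ⊢; linear_combination h00
      · exact h01
      · rw [hc]; push_cast at h10 ⊢; linear_combination -h10
    · rintro ⟨⟨⟨k1, h1⟩, ⟨k2, h2⟩⟩, ⟨k3, h3⟩⟩
      rw [hc] at h3
      intro i j
      fin_cases i <;> fin_cases j
      · exact ⟨k1 - Q * lucasU P Q m, by
          show (A ^ (m+1)) 0 0 = _; rw [e00]; push_cast; linear_combination h1⟩
      · exact ⟨k2, by show (A ^ (m+1)) 0 1 = _; rw [e01]; exact h2⟩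
      · exact ⟨-k3, by
          show (A ^ (m+1)) 1 0 = _; rw [e10]; push_cast; linear_combination -h3⟩
      · exact ⟨P * lucasU P Q (m+1) - k1 - Q * lucasU P Q m, by
          show (A ^ (m+1)) 1 1 = _; rw [e11]; push_cast
          linear_combination (lucasU P Q (m+1) : ℚ) * hP - h1⟩
end

section
/- A subset S ⊆ ℕ is the exponent semigroup of a 2×2 rational matrix if and only if S is a Lucas semigroup. That is, there exists a 2×2 matrix A over ℚ with S(A) = S if and only if there exist P, Q ∈ ℤ and R ∈ ℚ with L(P,Q,R) = S. -/
open Matrix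

theorem Rat.exists_intCast_eq_intCast_mul_iff (q : ℚ) (m : ℤ) :
    (∃ k : ℤ, (m : ℚ) * q = k) ↔ (q.den : ℤ) ∣ m := by
  constructor
  · rintro ⟨k, hk⟩
    have hnum : m * q.num = k * q.den := by
      have : ((m * q.num : ℤ) : ℚ) = (k * q.den : ℤ) := by
        push_cast
        rw [← Rat.mul_den_eq_num, ← mul_assoc, hk]
      exact_mod_cast this
    exact (Rat.isCoprime_num_den q).symm.dvd_of_dvd_mul_right ⟨k, by rw [hnum, mul_comm]⟩
  · rintro ⟨c, rfl⟩
    exact ⟨c * q.num, by push_cast; rw [← Rat.mul_den_eq_num]; ring⟩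

theorem Rat.exists_intCast_eq_sub_intCast_iff (q : ℚ) (m : ℤ) :
    (∃ k : ℤ, q - m = k) ↔ ∃ k : ℤ, q = k :=
  ⟨fun ⟨k, hk⟩ => ⟨k + m, by push_cast; linarith⟩,
    fun ⟨k, hk⟩ => ⟨k - m, by push_cast; linarith⟩⟩

theorem pow_succ_eq_lucasU_smul_sub {α : Type*} [Ring α] {P Q : ℤ} {a : α}
    (h : a ^ 2 = P • a - Q • 1) (n : ℕ) :
    a ^ (n + 1) = lucasU P Q (n + 1) • a - (Q * lucasU P Q n) • 1 := by
  induction n with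
  | zero => simp [lucasU]
  | succ n ih =>
    rw [pow_succ, ih, sub_mul, smul_mul_assoc, ← sq, h, smul_mul_assoc, one_mul]
    simp only [lucasU]
    module

theorem mem_lucasSG_iff {P Q : ℤ} {R : ℚ} {n : ℕ} :
    n ∈ lucasSG P Q R ↔ (R.den : ℤ) ∣ lucasU P Q n :=
  Rat.exists_intCast_eq_intCast_mul_iff R _

theorem lucasU_one_zero_succ (n : ℕ) : lucasU 1 0 (n + 1) = 1 := by
  induction n with
  | zero => rfl
  | succ n ih => simp [lucasU, ih]

theorem lucasSG_one_zero_inv_two : lucasSG 1 0 2⁻¹ = {0} := by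
  ext (_ | n) <;> simp [mem_lucasSG_iff, lucasU, lucasU_one_zero_succ]

namespace Matrix

def denLcm {m n : Type*} [Fintype m] [Fintype n] (A : Matrix m n ℚ) : ℕ :=
  Finset.univ.lcm fun ij : m × n => (A ij.1 ij.2).den

theorem denLcm_ne_zero {m n : Type*} [Fintype m] [Fintype n] (A : Matrix m n ℚ) :
    A.denLcm ≠ 0 := by
  simp [denLcm, Finset.lcm_eq_zero_iff]

theorem denLcm_dvd_iff {m n : Type*} [Fintype m] [Fintype n] (A : Matrix m n ℚ) (k : ℤ) :
    (A.denLcm : ℤ) ∣ k ↔ ∀ i j, ((A i j).den : ℤ) ∣ k := by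
  simp [denLcm, Int.natCast_dvd, Finset.lcm_dvd_iff]

theorem add_adjugate_fin_two {K : Type*} [CommRing K] (A : Matrix (Fin 2) (Fin 2) K) :
    A + adjugate A = A.trace • 1 := by
  ext i j
  fin_cases i <;> fin_cases j <;> simp [adjugate_fin_two, trace_fin_two]; ring

theorem sq_eq_trace_smul_sub_det_smul_one {K : Type*} [CommRing K]
    (A : Matrix (Fin 2) (Fin 2) K) : A ^ 2 = A.trace • A - A.det • 1 := by
  have h := congrArg (A * ·) (add_adjugate_fin_two A)
  simp only [mul_add, mul_adjugate, Matrix.mul_smul, mul_one] at h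
  rw [sq, ← h, add_sub_cancel_right]

theorem isIntegral_intCast_mapMatrix {n K : Type*} [Fintype n] [DecidableEq n] [Ring K]
    (N : Matrix n n ℤ) : IsIntegral ℤ ((Int.castRingHom K).mapMatrix N) :=
  (IsIntegral.of_finite ℤ N).map (Algebra.ofId ℤ K).mapMatrix

open scoped IsMulCommutative in
theorem isIntegral_trace_and_det_of_isIntegral {R K : Type*} [CommRing R] [CommRing K]
    [Nontrivial K] [Algebra R K] {A : Matrix (Fin 2) (Fin 2) K} (hA : IsIntegral R A)
    (hadj : IsIntegral R (adjugate A)) : IsIntegral R A.trace ∧ IsIntegral R A.det := by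
  -- Sums and products of integral elements are integral only in commutative rings, so we pass
  -- to the commutative subalgebra `K[A]`, which contains `adjugate A = tr A • 1 - A`.
  let S := Algebra.adjoin K {A}
  have hA_mem : A ∈ S := Algebra.self_mem_adjoin_singleton K A
  have hadj_mem : adjugate A ∈ S := by
    rw [eq_sub_of_add_eq' (add_adjugate_fin_two A)]
    exact sub_mem (Subalgebra.smul_mem _ (one_mem _) _) hA_mem
  have lift : ∀ x (hx : x ∈ S), IsIntegral R x → IsIntegral R (⟨x, hx⟩ : S) := fun x hx h =>
    (isIntegral_algHom_iff (S.val.restrictScalars R) Subtype.val_injective).mp h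
  have descend : ∀ c : K, IsIntegral R (algebraMap K S c) → IsIntegral R c := by
    refine fun c => (isIntegral_algHom_iff ((Algebra.ofId K S).restrictScalars R) ?_).mp
    intro a b hab
    exact FaithfulSMul.algebraMap_injective K (Matrix (Fin 2) (Fin 2) K) (congrArg Subtype.val hab)
  have hsum : (⟨A, hA_mem⟩ + ⟨adjugate A, hadj_mem⟩ : S) = algebraMap K S A.trace := by
    ext
    simp [add_adjugate_fin_two, Algebra.algebraMap_eq_smul_one]
  have hprod : (⟨A, hA_mem⟩ * ⟨adjugate A, hadj_mem⟩ : S) = algebraMap K S A.det := by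
    ext
    simp [mul_adjugate, Algebra.algebraMap_eq_smul_one]
  exact ⟨descend _ (hsum ▸ (lift _ _ hA).add (lift _ _ hadj)),
    descend _ (hprod ▸ (lift _ _ hA).mul (lift _ _ hadj))⟩

end Matrix

section ExpSG

variable {d : ℕ} {A : Matrix (Fin d) (Fin d) ℚ} {P Q : ℤ}

theorem zero_mem_expSG (A : Matrix (Fin d) (Fin d) ℚ) : 0 ∈ expSG A := by
  intro i j
  by_cases hij : i = j
  · exact ⟨1, by simp [hij]⟩
  · exact ⟨0, by simp [hij]⟩

theorem mem_expSG_iff_den_dvd_lucasU (h : A ^ 2 = P • A - Q • 1) (n : ℕ) :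
    n ∈ expSG A ↔ ∀ i j, ((A i j).den : ℤ) ∣ lucasU P Q n := by
  rcases n with _ | n
  · simp [lucasU, zero_mem_expSG]
  refine forall₂_congr fun i j => ?_
  obtain ⟨m, hm⟩ : ∃ m : ℤ, ((Q * lucasU P Q n) • (1 : Matrix (Fin d) (Fin d) ℚ)) i j = m := by
    by_cases hij : i = j
    · exact ⟨Q * lucasU P Q n, by simp [hij]⟩
    · exact ⟨0, by simp [hij]⟩
  rw [pow_succ_eq_lucasU_smul_sub h, Matrix.sub_apply, hm, Rat.exists_intCast_eq_sub_intCast_iff,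
    Matrix.smul_apply, zsmul_eq_mul, Rat.exists_intCast_eq_intCast_mul_iff]

theorem expSG_eq_lucasSG_inv_denLcm (h : A ^ 2 = P • A - Q • 1) :
    expSG A = lucasSG P Q (A.denLcm : ℚ)⁻¹ := by
  ext n
  rw [mem_expSG_iff_den_dvd_lucasU h, mem_lucasSG_iff, Rat.inv_natCast_den,
    if_neg A.denLcm_ne_zero, denLcm_dvd_iff]

end ExpSG

theorem expSG_companion (P Q : ℤ) (R : ℚ) :
    expSG !![0, (R.den : ℚ)⁻¹; -Q * R.den, (P : ℚ)] = lucasSG P Q R := by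
  have hden : ((Q : ℚ) * R.den).den = 1 := by exact_mod_cast Rat.den_intCast (Q * R.den)
  ext n
  rw [mem_expSG_iff_den_dvd_lucasU (P := P) (Q := Q), mem_lucasSG_iff]
  · simp [Fin.forall_fin_two, hden]
  · rw [sq_eq_trace_smul_sub_det_smul_one, trace_fin_two_of, det_fin_two_of,
      ← Int.cast_smul_eq_zsmul ℚ, ← Int.cast_smul_eq_zsmul ℚ]
    field_simp
    simp

theorem exists_intCast_trace_and_det_of_mem_expSG {A : Matrix (Fin 2) (Fin 2) ℚ} {m : ℕ}
    (hm : 0 < m) (h : m ∈ expSG A) : (∃ P : ℤ, A.trace = P) ∧ ∃ Q : ℤ, A.det = Q := by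
  choose N hN using h
  have hpow : A ^ m = (Int.castRingHom ℚ).mapMatrix (of N) := by
    ext i j
    exact hN i j
  have hA : IsIntegral ℤ A := .of_pow hm (hpow ▸ isIntegral_intCast_mapMatrix _)
  have hadj : IsIntegral ℤ A.adjugate := by
    refine .of_pow hm ?_
    rw [← adjugate_pow, hpow, ← RingHom.map_adjugate]
    exact isIntegral_intCast_mapMatrix _
  obtain ⟨ht, hd⟩ := isIntegral_trace_and_det_of_isIntegral hA hadj
  obtain ⟨P, hP⟩ := IsIntegrallyClosed.isIntegral_iff.mp ht
  obtain ⟨Q, hQ⟩ := IsIntegrallyClosed.isIntegral_iff.mp hd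
  exact ⟨⟨P, hP.symm⟩, Q, hQ.symm⟩

/-- A subset of `ℕ` is the exponent semigroup of a `2×2` rational matrix if
and only if it is a Lucas semigroup. -/
theorem expSG_two_dim_iff_lucasSG (S : Set ℕ) :
    (∃ A : Matrix (Fin 2) (Fin 2) ℚ, expSG A = S) ↔
      ∃ (P Q : ℤ) (R : ℚ), lucasSG P Q R = S := by
  constructor
  · rintro ⟨A, rfl⟩
    by_cases hpos : ∃ m, 0 < m ∧ m ∈ expSG A
    · obtain ⟨m, hm, hmem⟩ := hpos
      obtain ⟨⟨P, hP⟩, Q, hQ⟩ := exists_intCast_trace_and_det_of_mem_expSG hm hmem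
      refine ⟨P, Q, _, (expSG_eq_lucasSG_inv_denLcm ?_).symm⟩
      rw [sq_eq_trace_smul_sub_det_smul_one, hP, hQ, Int.cast_smul_eq_zsmul,
        Int.cast_smul_eq_zsmul]
    · refine ⟨1, 0, 2⁻¹, ?_⟩
      rw [lucasSG_one_zero_inv_two]
      ext (_ | n)
      · simp [zero_mem_expSG]
      · simpa using fun h => hpos ⟨n + 1, n.succ_pos, h⟩
  · rintro ⟨P, Q, R, rfl⟩
    exact ⟨_, expSG_companion P Q R⟩
end

section
/- Let S = ⟨5, 7, 16, 18⟩ be the additive submonoid of ℕ generated by 5, 7, 16, and 18 (so S = {0, 5, 7, 10, 12} ∪ {n ∈ ℕ : n ≥ 14}). Then: (i) S is ++−-avoiding, i.e., for every n ∈ ℕ, if n ∈ S and n+1 ∈ S then n+2 ∈ S (equivalently, every nonzero small element of S is lonely); and (ii) there is no 2×2 matrix A over ℚ with S(A) = S. Hence the matricial dimension of S is greater than 2, giving a counterexample to the lonely element conjecture. -/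
def U (t δ : ℤ) : ℕ → ℤ
  | 0 => 0
  | 1 => 1
  | n + 2 => t * U t δ (n + 1) - δ * U t δ n

lemma U_rec (t δ : ℤ) (n : ℕ) : U t δ (n + 2) = t * U t δ (n + 1) - δ * U t δ n := rfl

lemma U5 (t δ : ℤ) : U t δ 5 = t^4 - 3*t^2*δ + δ^2 := by simp [U]; ring
lemma U13z (δ : ℤ) : U 0 δ 13 = δ^6 := by simp [U]; ring
lemma U5z (δ : ℤ) : U 0 δ 5 = δ^2 := by simp [U]; ring
lemma U5' (t δ : ℤ) : U t δ 5 = t^4 - 3*t^2*δ + δ^2 := U5 t δ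
lemma U7 (t δ : ℤ) : U t δ 7 = t^6 - 5*t^4*δ + 6*t^2*δ^2 - δ^3 := by simp [U]; ring

lemma Upow (t : ℤ) (n : ℕ) : U t 0 (n+1) = t^n := by
  induction n using Nat.twoStepInduction with
  | zero => simp [U]
  | one => simp [U]
  | more n ih ih2 => rw [show n+1+1+1 = (n+1)+2 from rfl, U_rec, ih2]; ring

/-- Exact divisibility by `p^a`. -/
def ED (p a : ℕ) (x : ℤ) : Prop := (p:ℤ)^a ∣ x ∧ ¬ (p:ℤ)^(a+1) ∣ x

lemma ED.not_dvd_cofactor {p : ℕ} {a : ℕ} {x : ℤ} (h : ¬ (p:ℤ)^(a+1) ∣ (p:ℤ)^a * x) :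
    ¬ (p:ℤ) ∣ x := by
  rintro ⟨c, rfl⟩
  exact h ⟨c, by ring⟩

lemma ED.mul {p a b : ℕ} {x y : ℤ} (hp : p.Prime) (hx : ED p a x) (hy : ED p b y) :
    ED p (a+b) (x*y) := by
  obtain ⟨⟨x', rfl⟩, hx2⟩ := hx
  obtain ⟨⟨y', rfl⟩, hy2⟩ := hy
  have hpI : Prime (p:ℤ) := Nat.prime_iff_prime_int.mp hp
  have hx' : ¬ (p:ℤ) ∣ x' := ED.not_dvd_cofactor hx2
  have hy' : ¬ (p:ℤ) ∣ y' := ED.not_dvd_cofactor hy2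
  constructor
  · exact ⟨x'*y', by ring⟩
  · rintro ⟨c, hc⟩
    have hne : ((p:ℤ)^(a+b)) ≠ 0 := pow_ne_zero _ (by exact_mod_cast hp.ne_zero)
    have : (p:ℤ) ∣ x'*y' := by
      have : (p:ℤ)^(a+b) * (x'*y') = (p:ℤ)^(a+b) * ((p:ℤ)*c) := by
        linear_combination hc
      have := mul_left_cancel₀ hne this
      exact ⟨c, this⟩
    rcases hpI.dvd_mul.mp this with h | h
    · exact hx' h
    · exact hy' h

lemma ED_pow {p : ℕ} (hp : p.Prime) (a : ℕ) : ED p a ((p:ℤ)^a) := by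
  refine ⟨dvd_rfl, ?_⟩
  intro h
  have hne : ((p:ℤ)^a) ≠ 0 := pow_ne_zero _ (by exact_mod_cast hp.ne_zero)
  have : (p:ℤ) ∣ 1 := by
    rcases h with ⟨c, hc⟩
    refine ⟨c, mul_left_cancel₀ hne ?_⟩
    linear_combination hc
  exact (Nat.prime_iff_prime_int.mp hp).not_unit (isUnit_of_dvd_one this)

lemma ED_factorization {p : ℕ} (hp : p.Prime) {x : ℤ} (hx : x ≠ 0) :
    ED p (x.natAbs.factorization p) x := by
  have h0 : x.natAbs ≠ 0 := Int.natAbs_ne_zero.mpr hx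
  constructor
  · rw [show ((p:ℤ)^(x.natAbs.factorization p)) = ((p^(x.natAbs.factorization p) : ℕ) : ℤ) by push_cast; ring]
    rw [Int.natCast_dvd]
    exact Nat.ordProj_dvd _ _
  · rw [show ((p:ℤ)^(x.natAbs.factorization p + 1)) = ((p^(x.natAbs.factorization p + 1) : ℕ) : ℤ) by push_cast; ring]
    rw [Int.natCast_dvd]
    exact Nat.pow_succ_factorization_not_dvd h0 hp

lemma pow_cancel {p : ℕ} (hp : p.Prime) {a b : ℕ} {x : ℤ}
    (h : (p:ℤ)^(a+b) ∣ (p:ℤ)^a * x) : (p:ℤ)^b ∣ x := by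
  obtain ⟨w, hw⟩ := h
  have hne : ((p:ℤ)^a) ≠ 0 := pow_ne_zero _ (by exact_mod_cast hp.ne_zero)
  refine ⟨w, mul_left_cancel₀ hne ?_⟩
  linear_combination hw

lemma ED.le_of_pow_dvd {p a e : ℕ} {x : ℤ} (h : ED p a x) (hd : (p:ℤ)^e ∣ x) : e ≤ a := by
  by_contra hlt
  exact h.2 ((pow_dvd_pow _ (by omega)).trans hd)

lemma ED_one {p : ℕ} (hp : p.Prime) : ED p 0 (1:ℤ) := by
  refine ⟨one_dvd _, fun h => hp.one_lt.ne' ?_⟩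
  have h1 : (p:ℤ) ∣ 1 := by simpa using h
  have h2 : p ∣ (1:ℤ).natAbs := Int.natCast_dvd.mp h1
  simpa using Nat.dvd_one.mp (by simpa using h2)

lemma case1 (t δ : ℤ) (p τ : ℕ) (hp : p.Prime) (hts : ED p τ t)
    (hδ : (p:ℤ)^(2*τ+1) ∣ δ) : ∀ n, ED p (τ*n) (U t δ (n+1)) := by
  intro n
  induction n using Nat.twoStepInduction with
  | zero => simpa [U] using ED_one hp
  | one => simpa [U, Nat.mul_one] using hts
  | more n ih ih2 =>
    have hrec : U t δ (n+1+1+1) = t * U t δ (n+2) - δ * U t δ (n+1) := rfl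
    have hmul : ED p (τ*(n+2)) (t * U t δ (n+2)) := by
      rw [show τ*(n+2) = τ + τ*(n+1) by ring]
      exact hts.mul hp ih2
    have hδU : (p:ℤ)^(τ*(n+2)+1) ∣ δ * U t δ (n+1) := by
      have h1 := mul_dvd_mul hδ ih.1
      rw [← pow_add] at h1
      rw [show τ*(n+2)+1 = 2*τ+1+τ*n by ring]
      exact h1
    constructor
    · rw [hrec]
      exact dvd_sub hmul.1 ((pow_dvd_pow _ (Nat.le_succ _)).trans hδU)
    · intro h
      apply hmul.2
      have heq : t * U t δ (n+2) = U t δ (n+1+1+1) + δ * U t δ (n+1) := by rw [hrec]; ring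
      rw [heq]
      exact dvd_add h hδU

lemma U_scale (t₁ δ₁ P : ℤ) : ∀ n, U (P*t₁) (P^2*δ₁) (n+1) = P^n * U t₁ δ₁ (n+1) := by
  intro n
  induction n using Nat.twoStepInduction with
  | zero => simp [U]
  | one => simp [U]
  | more n ih ih2 =>
    have h1 : U (P*t₁) (P^2*δ₁) (n+1+1+1) = (P*t₁) * U (P*t₁) (P^2*δ₁) (n+2) - (P^2*δ₁) * U (P*t₁) (P^2*δ₁) (n+1) := rfl
    have h2 : U t₁ δ₁ (n+1+1+1) = t₁ * U t₁ δ₁ (n+2) - δ₁ * U t₁ δ₁ (n+1) := rfl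
    rw [h1, h2, ih, ih2]
    ring

lemma case_even {p : ℕ} (hp : p.Prime) (t₁ δ₁ : ℤ) (h5 : (p:ℤ) ∣ U t₁ δ₁ 5)
    (h7 : (p:ℤ) ∣ U t₁ δ₁ 7) (hδ : ¬ (p:ℤ) ∣ δ₁) : False := by
  haveI : Fact p.Prime := ⟨hp⟩
  rw [U5] at h5
  rw [U7] at h7
  set A := (t₁ : ZMod p) with hA
  set B := (δ₁ : ZMod p) with hB
  have e5 : A^4 - 3*A^2*B + B^2 = 0 := by
    have := (ZMod.intCast_zmod_eq_zero_iff_dvd _ p).mpr h5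
    push_cast at this
    linear_combination this
  have e7 : A^6 - 5*A^4*B + 6*A^2*B^2 - B^3 = 0 := by
    have := (ZMod.intCast_zmod_eq_zero_iff_dvd _ p).mpr h7
    push_cast at this
    linear_combination this
  have hBne : B ≠ 0 := by
    intro h
    exact hδ ((ZMod.intCast_zmod_eq_zero_iff_dvd _ p).mp h)
  have key : B^2 * (B - A^2) = 0 := by linear_combination e7 - (A^2 - 2*B)*e5
  rcases mul_eq_zero.mp key with h | h
  · exact hBne (by simpa [pow_eq_zero_iff] using h)
  · have hBA : B - A^2 = 0 := h
    have : B^2 = 0 := by linear_combination -e5 + (2*B - A^2)*hBA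
    exact hBne (by simpa [pow_eq_zero_iff] using this)

lemma case_odd {p : ℕ} (hp : p.Prime) (t₁ δ₁ : ℤ) (ht : (p:ℤ) ∣ t₁) (hδ : ED p 1 δ₁) :
    ∀ k, (p:ℤ)^k ∣ U t₁ δ₁ (2*k) ∧ ED p k (U t₁ δ₁ (2*k+1)) := by
  intro k
  induction k with
  | zero => exact ⟨by simp [U], by simpa [U] using ED_one hp⟩
  | succ k ih =>
    have hrec1 : U t₁ δ₁ (2*k+2) = t₁ * U t₁ δ₁ (2*k+1) - δ₁ * U t₁ δ₁ (2*k) := rfl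
    have hrec2 : U t₁ δ₁ (2*k+3) = t₁ * U t₁ δ₁ (2*k+2) - δ₁ * U t₁ δ₁ (2*k+1) := rfl
    have hδ1 : (p:ℤ) ∣ δ₁ := by simpa using hδ.1
    have hd2 : (p:ℤ)^(k+1) ∣ U t₁ δ₁ (2*(k+1)) := by
      rw [show 2*(k+1) = 2*k+2 from by omega, hrec1]
      have ha : (p:ℤ)^(k+1) ∣ t₁ * U t₁ δ₁ (2*k+1) := by
        have := mul_dvd_mul ht ih.2.1
        rwa [← pow_succ'] at this
      have hb : (p:ℤ)^(k+1) ∣ δ₁ * U t₁ δ₁ (2*k) := by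
        have := mul_dvd_mul hδ1 ih.1
        rwa [← pow_succ'] at this
      exact dvd_sub ha hb
    have hEDδU : ED p (k+1) (δ₁ * U t₁ δ₁ (2*k+1)) := by
      rw [show k+1 = 1+k from by omega]
      exact hδ.mul hp ih.2
    have htU2 : (p:ℤ)^(k+2) ∣ t₁ * U t₁ δ₁ (2*k+2) := by
      have := mul_dvd_mul ht (show (p:ℤ)^(k+1) ∣ U t₁ δ₁ (2*k+2) from by
        rw [show 2*k+2 = 2*(k+1) from by omega]; exact hd2)
      rwa [← pow_succ'] at this
    refine ⟨hd2, ?_, ?_⟩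
    · rw [show 2*(k+1)+1 = 2*k+3 from by omega, hrec2]
      exact dvd_sub ((pow_dvd_pow _ (by omega)).trans htU2) hEDδU.1
    · intro h
      rw [show 2*(k+1)+1 = 2*k+3 from by omega] at h
      apply hEDδU.2
      have heq : δ₁ * U t₁ δ₁ (2*k+1) = t₁ * U t₁ δ₁ (2*k+2) - U t₁ δ₁ (2*k+3) := by
        rw [hrec2]; ring
      rw [heq]
      exact dvd_sub htU2 h

theorem no_lucas (t δ : ℤ) (D : ℕ) (hD : D ≠ 0)
    (h5 : (D:ℤ) ∣ U t δ 5) (h7 : (D:ℤ) ∣ U t δ 7) (h12 : (D:ℤ) ∣ U t δ 12)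
    (h14 : ∀ n, 14 ≤ n → (D:ℤ) ∣ U t δ n) (h13 : ¬ (D:ℤ) ∣ U t δ 13) : False := by
  rcases eq_or_ne δ 0 with rfl | hδ0
  · have e12 : U t 0 12 = t^11 := Upow t 11
    have e13 : U t 0 13 = t^12 := Upow t 12
    refine h13 (e13 ▸ dvd_trans (e12 ▸ h12) ⟨t, by ring⟩)
  rcases eq_or_ne t 0 with rfl | ht0
  · have e5 : U 0 δ 5 = δ^2 := U5z δ
    have e13 : U 0 δ 13 = δ^6 := U13z δ
    exact h13 (e13 ▸ dvd_trans (e5 ▸ h5) ⟨δ^4, by ring⟩)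
  -- D ∣ δ^13
  have hkey : ∀ j n, 14 ≤ n + j → (D:ℤ) ∣ δ^j * U t δ n := by
    intro j
    induction j with
    | zero => intro n hn; simpa using h14 n (by omega)
    | succ j ih =>
      intro n hn
      rcases le_or_gt 14 (n+j) with h | h
      · have h' := ih n h
        have : δ^(j+1) * U t δ n = δ * (δ^j * U t δ n) := by ring
        rw [this]
        exact h'.mul_left δ
      · have h1 : (D:ℤ) ∣ δ^j * U t δ (n+1) := ih (n+1) (by omega)
        have h2 : (D:ℤ) ∣ δ^j * U t δ (n+2) := ih (n+2) (by omega)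
        have heq : δ^(j+1) * U t δ n = t * (δ^j * U t δ (n+1)) - δ^j * U t δ (n+2) := by
          rw [U_rec]; ring
        rw [heq]
        exact dvd_sub (h1.mul_left t) h2
  have hdd : (D:ℤ) ∣ δ^13 := by
    have := hkey 13 1 (by omega)
    simpa [U] using this
  -- prime extraction
  have hU13 : U t δ 13 ≠ 0 := fun h => h13 (h ▸ dvd_zero _)
  set m := (U t δ 13).natAbs with hm
  have hmne : m ≠ 0 := Int.natAbs_ne_zero.mpr hU13
  have hDm : ¬ D ∣ m := fun h => h13 (Int.natCast_dvd.mpr h)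
  have hfac : ¬ D.factorization ≤ m.factorization :=
    fun h => hDm ((Nat.factorization_le_iff_dvd hD hmne).mp h)
  rw [Finsupp.le_def] at hfac
  push_neg at hfac
  obtain ⟨p, hpfac⟩ := hfac
  set e := D.factorization p with he
  have hp : p.Prime := by
    by_contra hnp
    rw [Nat.factorization_eq_zero_of_not_prime D hnp] at he
    omega
  have hpI : Prime (p:ℤ) := Nat.prime_iff_prime_int.mp hp
  have he1 : 1 ≤ e := by omega
  have hpe : (p:ℤ)^e ∣ (D:ℤ) := by
    have : ((p^e : ℕ):ℤ) ∣ ((D:ℕ):ℤ) := Int.natCast_dvd_natCast.mpr (Nat.ordProj_dvd D p)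
    simpa using this
  have hdvd : ∀ n, (D:ℤ) ∣ U t δ n → (p:ℤ)^e ∣ U t δ n := fun n h => hpe.trans h
  have h13e : ¬ (p:ℤ)^e ∣ U t δ 13 := by
    intro h
    have h' : (p^e : ℕ) ∣ m := by
      rw [← Int.natCast_dvd]
      simpa using h
    exact absurd ((Nat.Prime.pow_dvd_iff_le_factorization hp hmne).mp h') (by omega)
  -- p ∣ δ and p ∣ t
  have hpδ : (p:ℤ) ∣ δ := by
    have h1 : (p:ℤ) ∣ δ^13 := (dvd_pow_self (p:ℤ) (by omega : e ≠ 0)).trans (hpe.trans hdd)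
    exact hpI.dvd_of_dvd_pow h1
  have hpt : (p:ℤ) ∣ t := by
    have h5p : (p:ℤ) ∣ U t δ 5 := (dvd_pow_self (p:ℤ) (by omega : e ≠ 0)).trans (hdvd 5 h5)
    rw [U5] at h5p
    have h4 : (p:ℤ) ∣ t^4 := by
      have heq : t^4 = (t^4 - 3*t^2*δ + δ^2) + δ*(3*t^2 - δ) := by ring
      rw [heq]
      exact dvd_add h5p (hpδ.mul_right _)
    exact hpI.dvd_of_dvd_pow h4
  have hEDt : ED p (t.natAbs.factorization p) t := ED_factorization hp ht0
  have hEDδ : ED p (δ.natAbs.factorization p) δ := ED_factorization hp hδ0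
  set τ := t.natAbs.factorization p with hτ
  set d := δ.natAbs.factorization p with hd
  have hτ1 : 1 ≤ τ := by
    by_contra hc
    have h0 : τ = 0 := by omega
    apply hEDt.2
    rw [h0]
    simpa using hpt
  have hd1 : 1 ≤ d := by
    by_contra hc
    have h0 : d = 0 := by omega
    apply hEDδ.2
    rw [h0]
    simpa using hpδ
  rcases le_or_gt (2*τ+1) d with hcase | hcase
  · -- case: 2τ + 1 ≤ d
    have hδ2τ : (p:ℤ)^(2*τ+1) ∣ δ := (pow_dvd_pow _ hcase).trans hEDδ.1
    have key := case1 t δ p τ hp hEDt hδ2τ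
    have h12' := key 11
    have h13' := key 12
    have hle : e ≤ τ*11 := h12'.le_of_pow_dvd (hdvd 12 h12)
    exact h13e ((pow_dvd_pow _ (by nlinarith : e ≤ τ*12)).trans h13'.1)
  · -- case: d ≤ 2τ
    set c := d / 2 with hc
    have hct : (p:ℤ)^c ∣ t := (pow_dvd_pow _ (by omega : c ≤ τ)).trans hEDt.1
    have hc2δ : (p:ℤ)^(2*c) ∣ δ := (pow_dvd_pow _ (by omega : 2*c ≤ d)).trans hEDδ.1
    obtain ⟨t₁, ht₁⟩ := hct
    obtain ⟨δ₁, hδ₁⟩ := hc2δ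
    have hscale : ∀ n, U t δ (n+1) = (p:ℤ)^(c*n) * U t₁ δ₁ (n+1) := by
      intro n
      have hs := U_scale t₁ δ₁ ((p:ℤ)^c) n
      rw [← ht₁, show ((p:ℤ)^c)^2 = (p:ℤ)^(2*c) by ring, ← hδ₁, ← pow_mul] at hs
      exact hs
    have he12 : 12*c + 1 ≤ e := by
      by_contra hcon
      push_neg at hcon
      apply h13e
      rw [show (13:ℕ) = 12+1 from rfl, hscale 12]
      exact (pow_dvd_pow _ (by omega : e ≤ c*12)).trans (dvd_mul_right _ _)
    rcases Nat.even_or_odd d with hEven | hOdd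
    · -- d even, d = 2c
      have hc2 : 2*c = d := by
        obtain ⟨w, hw⟩ := hEven
        omega
      have hpδ₁ : ¬ (p:ℤ) ∣ δ₁ := by
        rintro ⟨w, rfl⟩
        apply hEDδ.2
        refine ⟨w, ?_⟩
        rw [hδ₁, show d+1 = 2*c+1 from by omega]
        ring
      have h5p : (p:ℤ) ∣ U t₁ δ₁ 5 := by
        have hh := hdvd 5 h5
        rw [show (5:ℕ) = 4+1 from rfl, hscale 4] at hh
        have : (p:ℤ)^(c*4+1) ∣ (p:ℤ)^(c*4) * U t₁ δ₁ 5 :=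
          (pow_dvd_pow _ (by omega : c*4+1 ≤ e)).trans hh
        have h2 := pow_cancel hp this
        rwa [pow_one] at h2
      have h7p : (p:ℤ) ∣ U t₁ δ₁ 7 := by
        have hh := hdvd 7 h7
        rw [show (7:ℕ) = 6+1 from rfl, hscale 6] at hh
        have : (p:ℤ)^(c*6+1) ∣ (p:ℤ)^(c*6) * U t₁ δ₁ 7 :=
          (pow_dvd_pow _ (by omega : c*6+1 ≤ e)).trans hh
        have h2 := pow_cancel hp this
        rwa [pow_one] at h2
      exact case_even hp t₁ δ₁ h5p h7p hpδ₁
    · -- d odd, d = 2c+1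
      have hd2 : d = 2*c+1 := by
        obtain ⟨w, hw⟩ := hOdd
        omega
      have hpt₁ : (p:ℤ) ∣ t₁ := by
        have h1 : (p:ℤ)^(c+1) ∣ (p:ℤ)^c * t₁ := by
          rw [← ht₁]
          exact (pow_dvd_pow _ (by omega : c+1 ≤ τ)).trans hEDt.1
        have h2 := pow_cancel hp h1
        rwa [pow_one] at h2
      have hEDδ₁ : ED p 1 δ₁ := by
        constructor
        · have h1 : (p:ℤ)^(2*c+1) ∣ (p:ℤ)^(2*c) * δ₁ := by
            rw [← hδ₁]
            exact (pow_dvd_pow _ (by omega : 2*c+1 ≤ d)).trans hEDδ.1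
          have h2 := pow_cancel hp h1
          rw [pow_one]
          rwa [pow_one] at h2
        · rintro ⟨w, rfl⟩
          apply hEDδ.2
          refine ⟨w, ?_⟩
          rw [hδ₁, show d+1 = 2*c+2 from by omega]
          ring
      have key := case_odd hp t₁ δ₁ hpt₁ hEDδ₁
      have hED5 : ED p 2 (U t₁ δ₁ 5) := by
        have := (key 2).2
        simpa using this
      have hED13 : (p:ℤ)^6 ∣ U t₁ δ₁ 13 := by
        have := (key 6).2.1
        simpa using this
      have hle : e ≤ 4*c+2 := by
        by_contra hcon
        push_neg at hcon
        have h5e := hdvd 5 h5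
        rw [show (5:ℕ)=4+1 from rfl, hscale 4] at h5e
        apply hED5.2
        have h1 : (p:ℤ)^(c*4+3) ∣ (p:ℤ)^(c*4) * U t₁ δ₁ 5 :=
          (pow_dvd_pow _ (by omega : c*4+3 ≤ e)).trans h5e
        exact pow_cancel hp (by rwa [show c*4+3 = c*4+(2+1) from by omega] at h1)
      apply h13e
      rw [show (13:ℕ)=12+1 from rfl, hscale 12]
      refine (pow_dvd_pow _ (by omega : e ≤ c*12+6)).trans ?_
      rw [pow_add]
      exact mul_dvd_mul_left _ hED13


lemma ch2 (A : Matrix (Fin 2) (Fin 2) ℚ) : A^2 = A.trace • A - A.det • (1 : Matrix (Fin 2) (Fin 2) ℚ) := by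
  ext i j
  fin_cases i <;> fin_cases j <;>
    simp [pow_two, Matrix.mul_apply, Matrix.trace_fin_two, Matrix.det_fin_two, Fin.sum_univ_two,
      Matrix.one_apply] <;> ring

-- den dvd lemma
lemma den_mul_self (x : ℚ) : x * (x.den : ℚ) = (x.num : ℚ) := by
  have h : (x.den : ℚ) ≠ 0 := by
    exact_mod_cast x.den_ne_zero
  exact ((div_eq_iff h).mp (Rat.num_div_den x)).symm

lemma den_dvd_iff (x : ℚ) (m : ℤ) : (∃ k : ℤ, (m:ℚ) * x = k) ↔ ((x.den:ℤ) ∣ m) := by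
  constructor
  · rintro ⟨k, hk⟩
    have hxb := den_mul_self x
    have key : (m:ℚ) * x.num = k * x.den := by
      rw [← hxb]
      linear_combination (x.den : ℚ) * hk
    have keyZ : m * x.num = k * (x.den : ℤ) := by exact_mod_cast key
    have hdvd : (x.den:ℤ) ∣ m * x.num := ⟨k, by linarith⟩
    have hN : x.den ∣ m.natAbs * x.num.natAbs := by
      have := Int.natCast_dvd.mp hdvd
      rwa [Int.natAbs_mul] at this
    have hcop : x.den.Coprime x.num.natAbs := x.reduced.symm
    have := (Nat.Coprime.dvd_of_dvd_mul_right hcop hN)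
    exact Int.natCast_dvd.mpr this
  · rintro ⟨w, rfl⟩
    refine ⟨w * x.num, ?_⟩
    push_cast
    have hxb := den_mul_self x
    linear_combination w * hxb

lemma int_of_monic (x : ℚ) (δ s : ℤ) (h : x^5 - 5*δ*x^3 + 5*δ^2*x = s) : ∃ a : ℤ, x = a := by
  have hxb := den_mul_self x
  set a := x.num with ha
  set b := (x.den : ℤ) with hb
  have key : (a:ℚ)^5 - 5*δ*a^3*(b:ℚ)^2 + 5*δ^2*a*(b:ℚ)^4 = s*(b:ℚ)^5 := by
    have hbq : ((x.den : ℤ) : ℚ) = (x.den : ℚ) := by push_cast; ring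
    rw [hb, hbq, ← hxb]
    linear_combination (x.den:ℚ)^5 * h
  have keyZ : a^5 - 5*δ*a^3*b^2 + 5*δ^2*a*b^4 = s*b^5 := by exact_mod_cast key
  have hdvd : b ∣ a^5 := ⟨s*b^4 + 5*δ*a^3*b - 5*δ^2*a*b^3, by linarith⟩
  have hN : x.den ∣ a.natAbs^5 := by
    have := Int.natCast_dvd.mp (hb ▸ hdvd)
    rwa [Int.natAbs_pow] at this
  have hcop : x.den.Coprime (a.natAbs^5) := (x.reduced.symm).pow_right 5
  have hone : x.den = 1 := Nat.Coprime.eq_one_of_dvd hcop hN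
  refine ⟨x.num, ?_⟩
  rw [← Rat.num_div_den x, hone]
  simp

lemma int_of_pow5 (x : ℚ) (z : ℤ) (h : x^5 = z) : ∃ a : ℤ, x = a :=
  int_of_monic x 0 z (by push_cast; linear_combination h)


def UQ (t δ : ℚ) : ℕ → ℚ
  | 0 => 0
  | 1 => 1
  | n + 2 => t * UQ t δ (n + 1) - δ * UQ t δ n

lemma pow_formula (A : Matrix (Fin 2) (Fin 2) ℚ) (n : ℕ) :
    A^(n+1) = UQ A.trace A.det (n+1) • A
      - (A.det * UQ A.trace A.det n) • (1 : Matrix (Fin 2) (Fin 2) ℚ) := by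
  induction n using Nat.twoStepInduction with
  | zero => simp [UQ]
  | one =>
    rw [ch2]
    simp [UQ]
  | more n ih ih2 =>
    have hstep : A^(n+1+1+1) = A^(n+1+1) * A := pow_succ A _
    rw [hstep, ih2, show n+1+1+1 = (n+1)+2 from rfl,
      show UQ A.trace A.det ((n+1)+2)
        = A.trace * UQ A.trace A.det (n+2) - A.det * UQ A.trace A.det (n+1) from rfl]
    rw [sub_mul, smul_mul_assoc, smul_mul_assoc, one_mul, ← pow_two, ch2]
    module

def Sm : AddSubmonoid ℕ where
  carrier := ({0, 5, 7, 10, 12} : Set ℕ) ∪ {n : ℕ | 14 ≤ n}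
  zero_mem' := by
    left
    simp
  add_mem' := by
    intro a b ha hb
    simp only [Set.mem_union, Set.mem_insert_iff, Set.mem_singleton_iff, Set.mem_setOf_eq] at ha hb ⊢
    omega

lemma mem_cl_of_ge (n : ℕ) : 14 ≤ n → n ∈ AddSubmonoid.closure ({5, 7, 16, 18} : Set ℕ) := by
  induction n using Nat.strong_induction_on with
  | _ n ih =>
    intro hn
    have h5 : (5:ℕ) ∈ AddSubmonoid.closure ({5, 7, 16, 18} : Set ℕ) :=
      AddSubmonoid.subset_closure (by simp)
    have h7 : (7:ℕ) ∈ AddSubmonoid.closure ({5, 7, 16, 18} : Set ℕ) :=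
      AddSubmonoid.subset_closure (by simp)
    have h16 : (16:ℕ) ∈ AddSubmonoid.closure ({5, 7, 16, 18} : Set ℕ) :=
      AddSubmonoid.subset_closure (by simp)
    have h18 : (18:ℕ) ∈ AddSubmonoid.closure ({5, 7, 16, 18} : Set ℕ) :=
      AddSubmonoid.subset_closure (by simp)
    rcases le_or_gt n 18 with h | h
    · interval_cases n
      · exact add_mem h7 h7
      · exact add_mem (add_mem h5 h5) h5
      · exact h16
      · exact add_mem (add_mem h5 h5) h7
      · exact h18
    · have heq : n - 5 + 5 = n := by omega
      rw [← heq]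
      exact add_mem (ih (n-5) (by omega) (by omega)) h5

lemma part1 : ((AddSubmonoid.closure ({5, 7, 16, 18} : Set ℕ) : AddSubmonoid ℕ) : Set ℕ) =
    ({0, 5, 7, 10, 12} : Set ℕ) ∪ {n : ℕ | 14 ≤ n} := by
  ext n
  constructor
  · intro h
    have hle : AddSubmonoid.closure ({5, 7, 16, 18} : Set ℕ) ≤ Sm := by
      rw [AddSubmonoid.closure_le]
      intro x hx
      simp only [Set.mem_insert_iff, Set.mem_singleton_iff] at hx
      show x ∈ (({0, 5, 7, 10, 12} : Set ℕ) ∪ {n : ℕ | 14 ≤ n})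
      simp only [Set.mem_union, Set.mem_insert_iff, Set.mem_singleton_iff, Set.mem_setOf_eq]
      omega
    exact hle h
  · intro h
    simp only [Set.mem_union, Set.mem_insert_iff, Set.mem_singleton_iff, Set.mem_setOf_eq] at h
    have h5 : (5:ℕ) ∈ AddSubmonoid.closure ({5, 7, 16, 18} : Set ℕ) :=
      AddSubmonoid.subset_closure (by simp)
    have h7 : (7:ℕ) ∈ AddSubmonoid.closure ({5, 7, 16, 18} : Set ℕ) :=
      AddSubmonoid.subset_closure (by simp)
    rcases h with (rfl | rfl | rfl | rfl | rfl) | h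
    · exact zero_mem _
    · exact h5
    · exact h7
    · exact add_mem h5 h5
    · exact add_mem h5 h7
    · exact mem_cl_of_ge n h

/-- Counterexample to the lonely element conjecture: the numerical semigroup
`S = ⟨5, 7, 16, 18⟩ = {0, 5, 7, 10, 12} ∪ {n : n ≥ 14}` is `++−`-avoiding
(if `n, n+1 ∈ S` then `n+2 ∈ S`, i.e. every nonzero small element is lonely),
yet it is not the exponent semigroup of any `2×2` rational matrix; hence its
matricial dimension exceeds `2`. -/
theorem lonely_element_counterexample :
    ((AddSubmonoid.closure ({5, 7, 16, 18} : Set ℕ) : Set ℕ) =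
        {0, 5, 7, 10, 12} ∪ {n : ℕ | 14 ≤ n}) ∧
    (∀ n : ℕ, n ∈ AddSubmonoid.closure ({5, 7, 16, 18} : Set ℕ) →
      n + 1 ∈ AddSubmonoid.closure ({5, 7, 16, 18} : Set ℕ) →
      n + 2 ∈ AddSubmonoid.closure ({5, 7, 16, 18} : Set ℕ)) ∧
    ¬ ∃ A : Matrix (Fin 2) (Fin 2) ℚ,
        expSG A = (AddSubmonoid.closure ({5, 7, 16, 18} : Set ℕ) : Set ℕ) := by
  have hS := part1
  have hmemS : ∀ n : ℕ, n ∈ AddSubmonoid.closure ({5, 7, 16, 18} : Set ℕ) ↔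
      (n = 0 ∨ n = 5 ∨ n = 7 ∨ n = 10 ∨ n = 12 ∨ 14 ≤ n) := by
    intro n
    have := Set.ext_iff.mp hS n
    rw [show (n ∈ (AddSubmonoid.closure ({5, 7, 16, 18} : Set ℕ) : Set ℕ)) ↔
        n ∈ AddSubmonoid.closure ({5, 7, 16, 18} : Set ℕ) from Iff.rfl] at this
    rw [this]
    simp only [Set.mem_union, Set.mem_insert_iff, Set.mem_singleton_iff, Set.mem_setOf_eq]
    tauto
  refine ⟨hS, ?_, ?_⟩
  · intro n h1 h2
    rw [hmemS] at h1 h2 ⊢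
    omega
  · rintro ⟨A, hA⟩
    have hmem : ∀ n : ℕ, (∀ i j, ∃ k : ℤ, (A ^ n) i j = (k : ℚ)) ↔
        (n = 0 ∨ n = 5 ∨ n = 7 ∨ n = 10 ∨ n = 12 ∨ 14 ≤ n) := by
      intro n
      rw [← hmemS]
      exact (Set.ext_iff.mp hA n)
    -- entries of A^5
    have h5e : ∀ i j, ∃ k : ℤ, (A ^ 5) i j = (k : ℚ) := (hmem 5).mpr (by omega)
    obtain ⟨a, ha⟩ := h5e 0 0
    obtain ⟨b, hb⟩ := h5e 0 1
    obtain ⟨c, hc⟩ := h5e 1 0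
    obtain ⟨d, hd⟩ := h5e 1 1
    have hdet : A.det ^ 5 = ((a*d - b*c : ℤ) : ℚ) := by
      rw [← Matrix.det_pow, Matrix.det_fin_two, ha, hb, hc, hd]
      push_cast
      ring
    obtain ⟨δ, hδQ⟩ := int_of_pow5 A.det _ hdet
    have t5 : (A^5).trace = A.trace^5 - 5*A.det*A.trace^3 + 5*A.det^2*A.trace := by
      rw [show (5:ℕ) = 4+1 from rfl, pow_formula]
      simp only [Matrix.trace_sub, Matrix.trace_smul, Matrix.trace_one, smul_eq_mul]
      simp [UQ]
      ring
    have t5' : (A^5).trace = ((a + d : ℤ) : ℚ) := by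
      rw [Matrix.trace_fin_two, ha, hd]
      push_cast
      ring
    obtain ⟨t, htQ⟩ := int_of_monic A.trace δ (a + d) (by
      rw [← hδQ, ← t5, t5'])
    -- cast the Lucas sequence
    have hcast : ∀ n, UQ A.trace A.det n = ((U t δ n : ℤ) : ℚ) := by
      intro n
      induction n using Nat.twoStepInduction with
      | zero => simp [UQ, U]
      | one => simp [UQ, U]
      | more n ih ih2 =>
        rw [show UQ A.trace A.det (n+1+1)
            = A.trace * UQ A.trace A.det (n+1) - A.det * UQ A.trace A.det n from rfl,
          show U t δ (n+1+1) = t * U t δ (n+1) - δ * U t δ n from rfl,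
          ih, ih2, htQ, hδQ]
        push_cast
        ring
    -- entrywise integrality criterion
    have hentry : ∀ (n : ℕ) (i j : Fin 2),
        (∃ k : ℤ, (A^(n+1)) i j = (k : ℚ)) ↔ (((A i j).den : ℤ) ∣ U t δ (n+1)) := by
      intro n i j
      rw [pow_formula]
      have h1 : (UQ A.trace A.det (n+1) • A
          - (A.det * UQ A.trace A.det n) • (1 : Matrix (Fin 2) (Fin 2) ℚ)) i j
          = ((U t δ (n+1) : ℤ) : ℚ) * A i j
            - ((δ * U t δ n : ℤ) : ℚ) * (1 : Matrix (Fin 2) (Fin 2) ℚ) i j := by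
        simp only [Matrix.sub_apply, Matrix.smul_apply, smul_eq_mul, hcast]
        rw [hδQ]
        push_cast
        ring
      rw [h1]
      have h2 : ∃ w : ℤ, ((δ * U t δ n : ℤ) : ℚ) * (1 : Matrix (Fin 2) (Fin 2) ℚ) i j = (w : ℚ) := by
        by_cases hij : i = j
        · exact ⟨δ * U t δ n, by rw [hij, Matrix.one_apply_eq, mul_one]⟩
        · exact ⟨0, by rw [Matrix.one_apply_ne hij, mul_zero]; simp⟩
      obtain ⟨w, hw⟩ := h2
      rw [hw]
      constructor
      · rintro ⟨k, hk⟩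
        refine (den_dvd_iff (A i j) _).mp ⟨k + w, ?_⟩
        push_cast
        linear_combination hk
      · intro hdvd
        obtain ⟨k, hk⟩ := (den_dvd_iff (A i j) _).mpr hdvd
        exact ⟨k - w, by push_cast; linear_combination hk⟩
    -- the entry witnessing 13 ∉ S(A)
    have hnot13 : ¬ (∀ i j, ∃ k : ℤ, (A ^ 13) i j = (k : ℚ)) := by
      intro h
      have := (hmem 13).mp h
      omega
    push_neg at hnot13
    obtain ⟨i, j, hij⟩ := hnot13
    have h13d : ¬ (((A i j).den : ℤ) ∣ U t δ 13) := by
      intro hdvd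
      obtain ⟨k, hk⟩ := (hentry 12 i j).mpr hdvd
      exact hij k hk
    have hInd : ∀ n : ℕ, 1 ≤ n → (n = 5 ∨ n = 7 ∨ n = 10 ∨ n = 12 ∨ 14 ≤ n) →
        ((A i j).den : ℤ) ∣ U t δ n := by
      intro n hn1 hn
      have hmemn := (hmem n).mpr (by omega)
      have heq : n - 1 + 1 = n := by omega
      rw [← heq]
      exact (hentry (n-1) i j).mp (by rw [heq]; exact hmemn i j)
    exact no_lucas t δ (A i j).den (A i j).den_nz
      (hInd 5 (by omega) (by omega)) (hInd 7 (by omega) (by omega))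
      (hInd 12 (by omega) (by omega))
      (fun n hn => hInd n (by omega) (by omega)) h13d
end
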